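/- Let v, w be constants with 0 < v ≤ w and let φ : [0,1] → ℝ be continuous and strictly negative, such that v(−φ(x)) ≤ Vφ(x) ≤ w(−φ(x)) for all x ∈ [0,1]. Let f⁰ ∈ C¹([0,1]) be real-valued with (f⁰)′(x) > 0 for all x ∈ [0,1], and put α = min_{x∈[0,1]} (−φ(x)/(f⁰)′(x)) and β = max_{x∈[0,1]} (−φ(x)/(f⁰)′(x)). Then for every integer n ≥ 1 and every x ∈ [0,1], (α/β) v^n (f⁰)′(x) ≤ (−1)^n V^n((f⁰)′)(x) ≤ (β/α) w^n (f⁰)′(x). -/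

import Mathlib

open MeasureTheory Set Filter Topology

/-- The inverse branches u_{N,i}(x) = 1 - N/(x+i). -/
noncomputable def uNi (N i : ℕ) (x : ℝ) : ℝ := 1 - (N : ℝ) / (x + i)

/-- The operator V with (Uf)' = -V f':
`V g(x) = -Σ_{i ≥ N} [ (i+1-N)/(x+i)² ∫_{u_{N,i}(x)}^{u_{N,i+1}(x)} g
          + N(x+N-1)/((x+i-1)(x+i)³) g(u_{N,i}(x)) ]`, indexed by i = N + k. -/
noncomputable def V (N : ℕ) (g : ℝ → ℝ) (x : ℝ) : ℝ :=
  -∑' k : ℕ,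
    ((((N + k : ℕ) : ℝ) + 1 - N) / (x + ((N + k : ℕ) : ℝ)) ^ 2
        * (∫ u in (uNi N (N + k) x)..(uNi N (N + k + 1) x), g u)
      + ((N : ℝ) * (x + N - 1)) / ((x + ((N + k : ℕ) : ℝ) - 1) * (x + ((N + k : ℕ) : ℝ)) ^ 3)
        * g (uNi N (N + k) x))

/-!
The operator `-V` is positive: its series has nonnegative coefficients, and it converges
uniformly on `[0,1]` for continuous `g`, so `-V` preserves continuity and the pointwise order on
`[0,1]`. It is also homogeneous, hence `(-1)^n V^n = (-V)^n`. Iterating `v ψ ≤ -V ψ ≤ w ψ` for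
`ψ = -φ` gives `v^n ψ ≤ (-V)^n ψ ≤ w^n ψ`, and positivity carries the comparison
`ψ / β ≤ (f⁰)' ≤ ψ / α` through `(-V)^n`.
-/

noncomputable def integralCoeff (N : ℕ) (x : ℝ) (k : ℕ) : ℝ :=
  (((N + k : ℕ) : ℝ) + 1 - N) / (x + ((N + k : ℕ) : ℝ)) ^ 2

noncomputable def pointCoeff (N : ℕ) (x : ℝ) (k : ℕ) : ℝ :=
  ((N : ℝ) * (x + N - 1)) / ((x + ((N + k : ℕ) : ℝ) - 1) * (x + ((N + k : ℕ) : ℝ)) ^ 3)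

noncomputable def VTerm (N : ℕ) (g : ℝ → ℝ) (x : ℝ) (k : ℕ) : ℝ :=
  integralCoeff N x k * (∫ u in uNi N (N + k) x..uNi N (N + k + 1) x, g u)
    + pointCoeff N x k * g (uNi N (N + k) x)

lemma V_eq_neg_tsum (N : ℕ) (g : ℝ → ℝ) (x : ℝ) : V N g x = -∑' k, VTerm N g x k := rfl

section Branches

variable {N i : ℕ} {x : ℝ}

lemma uNi_mem_Icc (hi : N ≤ i) (hx : 0 ≤ x) : uNi N i x ∈ Icc (0 : ℝ) 1 := by
  have hNi : (N : ℝ) ≤ x + i := by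
    have : (N : ℝ) ≤ i := by exact_mod_cast hi
    linarith
  have h0 : 0 ≤ (N : ℝ) / (x + i) := by positivity
  have h1 : (N : ℝ) / (x + i) ≤ 1 := div_le_one_of_le₀ hNi (by positivity)
  constructor <;> simp only [uNi] <;> linarith

lemma uNi_le_uNi_succ (hxi : 0 < x + i) : uNi N i x ≤ uNi N (i + 1) x := by
  have : (N : ℝ) / (x + (i + 1 : ℕ)) ≤ N / (x + i) :=
    div_le_div_of_nonneg_left (Nat.cast_nonneg N) hxi (by push_cast; linarith)
  simp only [uNi]
  linarith

lemma uNi_succ_sub_uNi (hxi : 0 < x + i) :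
    uNi N (i + 1) x - uNi N i x = N / ((x + i) * (x + i + 1)) := by
  have hsucc : x + ((i + 1 : ℕ) : ℝ) = x + i + 1 := by push_cast; ring
  have : x + i + 1 ≠ 0 := by linarith
  simp only [uNi, hsucc]
  field_simp
  ring

lemma Icc_uNi_subset (hi : N ≤ i) (hx : 0 ≤ x) :
    Icc (uNi N i x) (uNi N (i + 1) x) ⊆ Icc (0 : ℝ) 1 :=
  Icc_subset_Icc (uNi_mem_Icc hi hx).1 (uNi_mem_Icc (hi.trans i.le_succ) hx).2

end Branches

section Coefficients

variable {N : ℕ} {x : ℝ}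

lemma natCast_add_add_one_sub (k : ℕ) : ((N + k : ℕ) : ℝ) + 1 - N = k + 1 := by
  push_cast; ring

lemma integralCoeff_nonneg (k : ℕ) : 0 ≤ integralCoeff N x k := by
  unfold integralCoeff
  rw [natCast_add_add_one_sub]
  positivity

lemma succ_le_add_natCast (hN : 1 ≤ N) (hx : 0 ≤ x) (k : ℕ) :
    (k : ℝ) + 1 ≤ x + ((N + k : ℕ) : ℝ) := by
  have : (1 : ℝ) ≤ N := by exact_mod_cast hN
  push_cast
  linarith

lemma pointCoeff_nonneg (hN : 1 ≤ N) (hx : 0 ≤ x) (k : ℕ) : 0 ≤ pointCoeff N x k := by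
  have : (1 : ℝ) ≤ N := by exact_mod_cast hN
  have hA := succ_le_add_natCast hN hx k
  unfold pointCoeff
  apply div_nonneg
  · apply mul_nonneg <;> linarith
  · apply mul_nonneg <;> [linarith; positivity]

lemma integralCoeff_mul_sub_le (hN : 1 ≤ N) (hx : 0 ≤ x) (k : ℕ) :
    integralCoeff N x k * (uNi N (N + k + 1) x - uNi N (N + k) x) ≤ N / ((k : ℝ) + 1) ^ 3 := by
  set A : ℝ := x + ((N + k : ℕ) : ℝ) with hA
  have hkA : (k : ℝ) + 1 ≤ A := succ_le_add_natCast hN hx k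
  have hk : (0 : ℝ) < k + 1 := by positivity
  rw [uNi_succ_sub_uNi (by linarith), integralCoeff, natCast_add_add_one_sub, ← hA]
  calc (k + 1) / A ^ 2 * (N / (A * (A + 1))) = (N : ℝ) * (k + 1) / (A ^ 3 * (A + 1)) := by
        field_simp
    _ ≤ (N : ℝ) * (k + 1) / ((k + 1) ^ 3 * (k + 1)) := by gcongr; linarith
    _ = N / ((k : ℝ) + 1) ^ 3 := by field_simp

lemma pointCoeff_le (hN : 2 ≤ N) (hx : x ∈ Icc (0 : ℝ) 1) (k : ℕ) :
    pointCoeff N x k ≤ N ^ 2 / ((k : ℝ) + 1) ^ 3 := by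
  have hN' : (2 : ℝ) ≤ N := by exact_mod_cast hN
  set A : ℝ := x + ((N + k : ℕ) : ℝ) with hA
  have hkA : (k : ℝ) + 1 ≤ A - 1 := by rw [hA]; push_cast; linarith [hx.1]
  have hk : (1 : ℝ) ≤ k + 1 := by linarith [k.cast_nonneg (α := ℝ)]
  calc pointCoeff N x k = N * (x + N - 1) / ((A - 1) * A ^ 3) := rfl
    _ ≤ N * N / ((k + 1) * (k + 1) ^ 3) := by
        gcongr <;> linarith [hx.1, hx.2]
    _ ≤ N ^ 2 / (1 * (k + 1) ^ 3) := by rw [← sq]; gcongr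
    _ = N ^ 2 / ((k : ℝ) + 1) ^ 3 := by rw [one_mul]

end Coefficients

lemma summable_div_natCast_add_one_pow_three (C : ℝ) :
    Summable (fun k : ℕ => C / ((k : ℝ) + 1) ^ 3) := by
  have h : Summable (fun k : ℕ => 1 / ((k + 1 : ℕ) : ℝ) ^ 3) :=
    (summable_nat_add_iff 1).mpr (Real.summable_one_div_nat_pow.mpr (by norm_num))
  push_cast at h
  simpa [div_eq_mul_inv] using h.mul_left C

section Terms

variable {N : ℕ} {x : ℝ} {g h : ℝ → ℝ}

lemma add_natCast_pos (hN : 1 ≤ N) (hx : 0 ≤ x) (k : ℕ) : 0 < x + ((N + k : ℕ) : ℝ) :=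
  lt_of_lt_of_le (by positivity) (succ_le_add_natCast hN hx k)

lemma norm_VTerm_le (hN : 2 ≤ N) (hx : x ∈ Icc (0 : ℝ) 1) {M : ℝ}
    (hM : ∀ y ∈ Icc (0 : ℝ) 1, ‖g y‖ ≤ M) (k : ℕ) :
    ‖VTerm N g x k‖ ≤ (N + N ^ 2) * M / ((k : ℝ) + 1) ^ 3 := by
  have hN1 : 1 ≤ N := by omega
  have hM0 : 0 ≤ M := (norm_nonneg _).trans (hM 0 ⟨le_rfl, zero_le_one⟩)
  have hle := uNi_le_uNi_succ (N := N) (add_natCast_pos hN1 hx.1 k)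
  have hint : ‖∫ u in uNi N (N + k) x..uNi N (N + k + 1) x, g u‖
      ≤ M * (uNi N (N + k + 1) x - uNi N (N + k) x) := by
    rw [← abs_of_nonneg (sub_nonneg.mpr hle)]
    refine intervalIntegral.norm_integral_le_of_norm_le_const fun y hy => hM y ?_
    rw [uIoc_of_le hle] at hy
    exact Icc_uNi_subset (Nat.le_add_right N k) hx.1 (Ioc_subset_Icc_self hy)
  calc ‖VTerm N g x k‖
      ≤ integralCoeff N x k * (M * (uNi N (N + k + 1) x - uNi N (N + k) x))
        + pointCoeff N x k * M := by
        refine (norm_add_le _ _).trans (add_le_add ?_ ?_) <;> rw [norm_mul, Real.norm_of_nonneg]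
        · gcongr
          exact integralCoeff_nonneg k
        · exact integralCoeff_nonneg k
        · gcongr
          · exact pointCoeff_nonneg hN1 hx.1 k
          · exact hM _ (uNi_mem_Icc (Nat.le_add_right N k) hx.1)
        · exact pointCoeff_nonneg hN1 hx.1 k
    _ ≤ M * (N / ((k : ℝ) + 1) ^ 3) + N ^ 2 / ((k : ℝ) + 1) ^ 3 * M := by
        rw [mul_left_comm]
        gcongr
        · exact integralCoeff_mul_sub_le hN1 hx.1 k
        · exact pointCoeff_le hN hx k
    _ = (N + N ^ 2) * M / ((k : ℝ) + 1) ^ 3 := by ring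

lemma summable_VTerm (hN : 2 ≤ N) (hg : ContinuousOn g (Icc 0 1)) (hx : x ∈ Icc (0 : ℝ) 1) :
    Summable (VTerm N g x) := by
  obtain ⟨M, hM⟩ := isCompact_Icc.exists_bound_of_continuousOn hg
  exact (summable_div_natCast_add_one_pow_three _).of_norm_bounded (norm_VTerm_le hN hx hM)

end Terms

section Operator

variable {N : ℕ} {x : ℝ} {g h : ℝ → ℝ}

lemma VTerm_mono (hN : 1 ≤ N) (hx : 0 ≤ x) (hg : ContinuousOn g (Icc 0 1))
    (hh : ContinuousOn h (Icc 0 1)) (hgh : ∀ y ∈ Icc (0 : ℝ) 1, g y ≤ h y) (k : ℕ) :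
    VTerm N g x k ≤ VTerm N h x k := by
  have hle := uNi_le_uNi_succ (N := N) (add_natCast_pos hN hx k)
  have hsub := Icc_uNi_subset (Nat.le_add_right N k) hx
  unfold VTerm
  gcongr ?_ * ?_ + ?_ * ?_
  · exact integralCoeff_nonneg k
  · exact intervalIntegral.integral_mono_on hle ((hg.mono hsub).intervalIntegrable_of_Icc hle)
      ((hh.mono hsub).intervalIntegrable_of_Icc hle) fun y hy => hgh y (hsub hy)
  · exact pointCoeff_nonneg hN hx k
  · exact hgh _ (uNi_mem_Icc (Nat.le_add_right N k) hx)

lemma V_smul (c : ℝ) (g : ℝ → ℝ) : V N (c • g) = c • V N g := by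
  funext x
  simp only [V_eq_neg_tsum, VTerm, Pi.smul_apply, smul_eq_mul,
    intervalIntegral.integral_const_mul]
  rw [mul_neg, ← tsum_mul_left]
  congr 1
  refine tsum_congr fun k => ?_
  ring

lemma V_congr (hN : 1 ≤ N) (hgh : EqOn g h (Icc 0 1)) (hx : 0 ≤ x) : V N g x = V N h x := by
  simp only [V_eq_neg_tsum, VTerm]
  congr 1
  refine tsum_congr fun k => ?_
  have hle := uNi_le_uNi_succ (N := N) (add_natCast_pos hN hx k)
  have hsub := Icc_uNi_subset (Nat.le_add_right N k) hx
  rw [intervalIntegral.integral_congr fun y hy => hgh (hsub (uIcc_of_le hle ▸ hy)),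
    hgh (uNi_mem_Icc (Nat.le_add_right N k) hx)]

lemma continuousOn_VTerm (hN : 2 ≤ N) (hg : Continuous g) (k : ℕ) :
    ContinuousOn (fun x => VTerm N g x k) (Icc 0 1) := by
  have hA : ∀ i, N ≤ i → ∀ y ∈ Icc (0 : ℝ) 1, 1 < y + i := fun i hi y hy => by
    have : (2 : ℝ) ≤ i := by exact_mod_cast hN.trans hi
    linarith [hy.1]
  have hu : ∀ i, N ≤ i → ContinuousOn (fun y => uNi N i y) (Icc 0 1) := fun i hi => by
    simp only [uNi]
    exact continuousOn_const.sub
      (continuousOn_const.div (by fun_prop) fun y hy => (by linarith [hA i hi y hy] : y + i ≠ 0))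
  have hF := intervalIntegral.continuous_primitive (μ := volume)
    (fun a b => hg.intervalIntegrable a b) 0
  have hint : ContinuousOn (fun y => ∫ u in uNi N (N + k) y..uNi N (N + k + 1) y, g u)
      (Icc 0 1) := by
    refine ((hF.comp_continuousOn (hu (N + k + 1) (by omega))).sub
      (hF.comp_continuousOn (hu _ (Nat.le_add_right N k)))).congr fun y _ => ?_
    exact (intervalIntegral.integral_interval_sub_left (hg.intervalIntegrable _ _)
      (hg.intervalIntegrable _ _)).symm
  have hcoeff₁ : ContinuousOn (fun y => integralCoeff N y k) (Icc 0 1) :=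
    continuousOn_const.div (by fun_prop) fun y hy =>
      pow_ne_zero 2 (by linarith [hA _ (Nat.le_add_right N k) y hy])
  have hcoeff₂ : ContinuousOn (fun y => pointCoeff N y k) (Icc 0 1) :=
    ContinuousOn.div (by fun_prop) (by fun_prop) fun y hy => by
      have := hA _ (Nat.le_add_right N k) y hy
      exact mul_ne_zero (by linarith) (pow_ne_zero 3 (by linarith))
  exact (hcoeff₁.mul hint).add
    (hcoeff₂.mul (hg.comp_continuousOn (hu _ (Nat.le_add_right N k))))

lemma continuousOn_V_of_continuous (hN : 2 ≤ N) (hg : Continuous g) :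
    ContinuousOn (V N g) (Icc 0 1) := by
  obtain ⟨M, hM⟩ := isCompact_Icc.exists_bound_of_continuousOn hg.continuousOn
  exact (continuousOn_tsum (continuousOn_VTerm hN hg) (summable_div_natCast_add_one_pow_three _)
    fun k y hy => norm_VTerm_le hN hy hM k).neg

lemma continuousOn_V (hN : 2 ≤ N) (hg : ContinuousOn g (Icc 0 1)) :
    ContinuousOn (V N g) (Icc 0 1) := by
  set G := IccExtend zero_le_one ((Icc (0 : ℝ) 1).domRestrict g)
  have hG : Continuous G := (continuousOn_iff_continuous_domRestrict.mp hg).Icc_extend'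
  have hGg : EqOn G g (Icc 0 1) := fun y hy => IccExtend_of_mem _ _ hy
  exact (continuousOn_V_of_continuous hN hG).congr fun y hy =>
    V_congr (by omega) hGg.symm hy.1

end Operator

noncomputable def negV (N : ℕ) (g : ℝ → ℝ) : ℝ → ℝ := -V N g

section NegV

variable {N : ℕ} {g h ψ : ℝ → ℝ}

lemma negV_smul (c : ℝ) (g : ℝ → ℝ) : negV N (c • g) = c • negV N g := by
  simp only [negV, V_smul, smul_neg]

lemma iterate_negV_smul (c : ℝ) (g : ℝ → ℝ) (n : ℕ) :
    (negV N)^[n] (c • g) = c • (negV N)^[n] g := by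
  induction n with
  | zero => rfl
  | succ n ih => rw [Function.iterate_succ_apply', Function.iterate_succ_apply', ih, negV_smul]

lemma iterate_V_eq (g : ℝ → ℝ) (n : ℕ) : (V N)^[n] g = (-1 : ℝ) ^ n • (negV N)^[n] g := by
  induction n with
  | zero => simp
  | succ n ih =>
    rw [Function.iterate_succ_apply', Function.iterate_succ_apply', ih, V_smul, negV, pow_succ, mul_smul]
    simp

lemma continuousOn_iterate_negV (hN : 2 ≤ N) (hg : ContinuousOn g (Icc 0 1)) (n : ℕ) :
    ContinuousOn ((negV N)^[n] g) (Icc 0 1) := by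
  induction n with
  | zero => exact hg
  | succ n ih => rw [Function.iterate_succ_apply']; exact (continuousOn_V hN ih).neg

lemma negV_le_negV (hN : 2 ≤ N) (hg : ContinuousOn g (Icc 0 1)) (hh : ContinuousOn h (Icc 0 1))
    (hgh : ∀ y ∈ Icc (0 : ℝ) 1, g y ≤ h y) {x : ℝ} (hx : x ∈ Icc (0 : ℝ) 1) :
    negV N g x ≤ negV N h x := by
  simp only [negV, Pi.neg_apply, V_eq_neg_tsum, neg_neg]
  exact Summable.tsum_le_tsum (VTerm_mono (by omega) hx.1 hg hh hgh)
    (summable_VTerm hN hg hx) (summable_VTerm hN hh hx)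

lemma iterate_negV_le_iterate_negV (hN : 2 ≤ N) (hg : ContinuousOn g (Icc 0 1))
    (hh : ContinuousOn h (Icc 0 1)) (hgh : ∀ y ∈ Icc (0 : ℝ) 1, g y ≤ h y) (n : ℕ) :
    ∀ x ∈ Icc (0 : ℝ) 1, (negV N)^[n] g x ≤ (negV N)^[n] h x := by
  induction n with
  | zero => exact hgh
  | succ n ih =>
    simp only [Function.iterate_succ_apply']
    exact fun x => negV_le_negV hN (continuousOn_iterate_negV hN hg n)
      (continuousOn_iterate_negV hN hh n) ih

lemma pow_mul_le_iterate_negV_le (hN : 2 ≤ N) (hψ : ContinuousOn ψ (Icc 0 1)) {a b : ℝ}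
    (ha : 0 ≤ a) (hb : 0 ≤ b)
    (hab : ∀ x ∈ Icc (0 : ℝ) 1, a * ψ x ≤ negV N ψ x ∧ negV N ψ x ≤ b * ψ x) (n : ℕ) :
    ∀ x ∈ Icc (0 : ℝ) 1, a ^ n * ψ x ≤ (negV N)^[n] ψ x ∧ (negV N)^[n] ψ x ≤ b ^ n * ψ x := by
  induction n with
  | zero => simp
  | succ n ih =>
    intro x hx
    have hnegVψ := continuousOn_iterate_negV hN hψ 1
    have hlo := iterate_negV_le_iterate_negV hN (hψ.const_smul a) hnegVψ
      (fun y hy => (hab y hy).1) n x hx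
    have hhi := iterate_negV_le_iterate_negV hN hnegVψ (hψ.const_smul b)
      (fun y hy => (hab y hy).2) n x hx
    simp only [iterate_negV_smul, Pi.smul_apply, smul_eq_mul, Function.iterate_one] at hlo hhi
    rw [Function.iterate_succ_apply]
    constructor
    · calc a ^ (n + 1) * ψ x = a * (a ^ n * ψ x) := by ring
        _ ≤ a * (negV N)^[n] ψ x := by gcongr; exact (ih x hx).1
        _ ≤ _ := hlo
    · calc _ ≤ b * (negV N)^[n] ψ x := hhi
        _ ≤ b * (b ^ n * ψ x) := by gcongr; exact (ih x hx).2
        _ = b ^ (n + 1) * ψ x := by ring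

end NegV

theorem stmt18_general (N : ℕ) (hN : 2 ≤ N)
    (f0' : ℝ → ℝ)
    (hcont : ContinuousOn f0' (Set.Icc (0:ℝ) 1))
    (hpos : ∀ x ∈ Set.Icc (0:ℝ) 1, 0 < f0' x)
    (v w : ℝ) (hv : 0 < v) (hvw : v ≤ w)
    (φ : ℝ → ℝ) (hφc : ContinuousOn φ (Set.Icc (0:ℝ) 1))
    (hφ : ∀ x ∈ Set.Icc (0:ℝ) 1, φ x < 0)
    (hVφ : ∀ x ∈ Set.Icc (0:ℝ) 1, v * (-φ x) ≤ V N φ x ∧ V N φ x ≤ w * (-φ x))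
    (α β : ℝ)
    (hα : IsLeast ((fun x => -φ x / f0' x) '' Set.Icc (0:ℝ) 1) α)
    (hβ : IsGreatest ((fun x => -φ x / f0' x) '' Set.Icc (0:ℝ) 1) β)
    :
    ∀ n : ℕ, 1 ≤ n → ∀ x ∈ Set.Icc (0:ℝ) 1,
      α / β * v ^ n * f0' x ≤ (-1 : ℝ) ^ n * (V N)^[n] f0' x ∧
      (-1 : ℝ) ^ n * (V N)^[n] f0' x ≤ β / α * w ^ n * f0' x := by
  intro n _ x hx
  obtain ⟨y, hy, hαy⟩ := hα.1
  have hα0 : 0 < α := hαy ▸ div_pos (neg_pos.mpr (hφ y hy)) (hpos y hy)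
  have hβ0 : 0 < β := hα0.trans_le (hβ.2 hα.1)
  have hψ : ContinuousOn (-φ) (Icc 0 1) := hφc.neg
  have hlow : ∀ y ∈ Icc (0 : ℝ) 1, α * f0' y ≤ -φ y := fun y hy =>
    (le_div_iff₀ (hpos y hy)).mp (hα.2 ⟨y, hy, rfl⟩)
  have hhigh : ∀ y ∈ Icc (0 : ℝ) 1, -φ y ≤ β * f0' y := fun y hy =>
    (div_le_iff₀ (hpos y hy)).mp (hβ.2 ⟨y, hy, rfl⟩)
  have hψ_le : ∀ y ∈ Icc (0 : ℝ) 1, β⁻¹ * (-φ) y ≤ f0' y := fun y hy =>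
    (inv_mul_le_iff₀ hβ0).mpr (hhigh y hy)
  have hψ_ge : ∀ y ∈ Icc (0 : ℝ) 1, f0' y ≤ α⁻¹ * (-φ) y := fun y hy =>
    (le_inv_mul_iff₀ hα0).mpr (hlow y hy)
  have hnegVψ : negV N (-φ) = V N φ := by
    rw [← neg_one_smul ℝ φ, negV, V_smul, neg_one_smul, neg_neg]
  have hpow := pow_mul_le_iterate_negV_le hN hψ hv.le (hv.le.trans hvw)
    (by simpa only [hnegVψ, Pi.neg_apply] using hVφ) n x hx
  have hlo := iterate_negV_le_iterate_negV hN (hψ.const_smul β⁻¹) hcont hψ_le n x hx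
  have hhi := iterate_negV_le_iterate_negV hN hcont (hψ.const_smul α⁻¹) hψ_ge n x hx
  simp only [iterate_negV_smul, Pi.smul_apply, smul_eq_mul] at hlo hhi
  have hsign : (-1 : ℝ) ^ n * (V N)^[n] f0' x = (negV N)^[n] f0' x := by
    rw [iterate_V_eq, Pi.smul_apply, smul_eq_mul, ← mul_assoc, ← mul_pow]
    norm_num
  rw [hsign]
  constructor
  · calc α / β * v ^ n * f0' x = β⁻¹ * (v ^ n * (α * f0' x)) := by ring
      _ ≤ β⁻¹ * (v ^ n * (-φ) x) := by
          gcongr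
          exact hlow x hx
      _ ≤ β⁻¹ * (negV N)^[n] (-φ) x := by gcongr; exact hpow.1
      _ ≤ _ := hlo
  · calc _ ≤ α⁻¹ * (negV N)^[n] (-φ) x := hhi
      _ ≤ α⁻¹ * (w ^ n * (-φ) x) := by gcongr; exact hpow.2
      _ ≤ α⁻¹ * (w ^ n * (β * f0' x)) := by
          gcongr
          · exact pow_nonneg (hv.le.trans hvw) n
          · exact hhigh x hx
      _ = β / α * w ^ n * f0' x := by ring

theorem stmt18 (N : ℕ) (hN : 2 ≤ N)
    (f0 f0' : ℝ → ℝ)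
    (hderiv : ∀ x ∈ Set.Icc (0:ℝ) 1, HasDerivWithinAt f0 (f0' x) (Set.Icc (0:ℝ) 1) x)
    (hcont : ContinuousOn f0' (Set.Icc (0:ℝ) 1))
    (hpos : ∀ x ∈ Set.Icc (0:ℝ) 1, 0 < f0' x)
    (v w : ℝ) (hv : 0 < v) (hvw : v ≤ w)
    (φ : ℝ → ℝ) (hφc : ContinuousOn φ (Set.Icc (0:ℝ) 1))
    (hφ : ∀ x ∈ Set.Icc (0:ℝ) 1, φ x < 0)
    (hVφ : ∀ x ∈ Set.Icc (0:ℝ) 1, v * (-φ x) ≤ V N φ x ∧ V N φ x ≤ w * (-φ x))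
    (α β : ℝ)
    (hα : IsLeast ((fun x => -φ x / f0' x) '' Set.Icc (0:ℝ) 1) α)
    (hβ : IsGreatest ((fun x => -φ x / f0' x) '' Set.Icc (0:ℝ) 1) β)
    :
    ∀ n : ℕ, 1 ≤ n → ∀ x ∈ Set.Icc (0:ℝ) 1,
      α / β * v ^ n * f0' x ≤ (-1 : ℝ) ^ n * (V N)^[n] f0' x ∧
      (-1 : ℝ) ^ n * (V N)^[n] f0' x ≤ β / α * w ^ n * f0' x :=
  stmt18_general N hN f0' hcont hpos v w hv hvw φ hφc hφ hVφ α β hα hβ
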